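/- arXiv:1801.10607 — 9 statements merged into one kernel-verified Lean document; each statement's English description precedes it below -/
import Mathlib

section
/- If T is a set of ℓ-rooks in {0,...,n-1}^k such that no rook attacks (covers) the location of another rook, then |T| ≤ k·n^{k-1}/ℓ. -/
/-- An ℓ-rook in `{0,...,n-1}^k`: a point together with a set of chosen coordinate
directions. -/
abbrev Rook (n k : ℕ) := (Fin k → Fin n) × Finset (Fin k)

/-- A rook attacks every point differing from its location in exactly one of its
chosen coordinates. -/
def Rook.attacks {n k : ℕ} (R : Rook n k) (q : Fin k → Fin n) : Prop :=
  ∃ i ∈ R.2, q i ≠ R.1 i ∧ ∀ j, j ≠ i → q j = R.1 j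

theorem packing_singleton_bound (n k ℓ : ℕ) (hn : 0 < n) (hℓ : 0 < ℓ) (hlk : ℓ ≤ k)
    (T : Finset (Rook n k))
    (hdirs : ∀ R ∈ T, R.2.card = ℓ)
    (hdistinct : ∀ R1 ∈ T, ∀ R2 ∈ T, R1 ≠ R2 → R1.1 ≠ R2.1)
    (hpack : ∀ R1 ∈ T, ∀ R2 ∈ T, R1 ≠ R2 → ¬ R1.attacks R2.1) :
    (T.card : ℝ) ≤ (k : ℝ) * (n : ℝ) ^ (k - 1) / (ℓ : ℝ) := by
  -- the set of pairs (rook, chosen direction)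
  set S : Finset ((_ : Rook n k) × Fin k) := T.sigma (fun R => R.2) with hS
  -- the target type of "lines"
  let D := (i : Fin k) × ({j : Fin k // j ≠ i} → Fin n)
  let f : ((_ : Rook n k) × Fin k) → D := fun p => ⟨p.2, fun j => p.1.1 j.1⟩
  have hinj : Set.InjOn f S := by
    rintro ⟨R1, i1⟩ hp ⟨R2, i2⟩ hq hfe
    rw [hS, Finset.mem_coe, Finset.mem_sigma] at hp hq
    obtain ⟨hR1T, hi1⟩ := hp
    obtain ⟨hR2T, hi2⟩ := hq
    have h1 : i1 = i2 := congrArg Sigma.fst hfe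
    subst h1
    have h2' : (fun j : {j : Fin k // j ≠ i1} => R1.1 j.1) = fun j => R2.1 j.1 :=
      eq_of_heq (Sigma.ext_iff.mp hfe).2
    have hagree : ∀ j : Fin k, j ≠ i1 → R1.1 j = R2.1 j := by
      intro j hj
      exact congrFun h2' ⟨j, hj⟩
    by_cases hR : R1 = R2
    · subst hR; rfl
    · exfalso
      have hloc : R1.1 ≠ R2.1 := hdistinct R1 hR1T R2 hR2T hR
      have hdi : R2.1 i1 ≠ R1.1 i1 := by
        intro h
        apply hloc
        funext j
        by_cases hj : j = i1
        · subst hj; exact h.symm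
        · exact hagree j hj
      exact hpack R1 hR1T R2 hR2T hR ⟨i1, hi1, hdi, fun j hj => (hagree j hj).symm⟩
  have hcard : S.card ≤ Fintype.card D := by
    have := Finset.card_le_card_of_injOn f (fun _ _ => Finset.mem_univ _) hinj
    simpa using this
  have hsub : ∀ i : Fin k, Fintype.card {j : Fin k // j ≠ i} = k - 1 := by
    intro i
    have : Fintype.card {j : Fin k // ¬ (j = i)} = k - 1 := by
      rw [Fintype.card_subtype_compl, Fintype.card_subtype_eq, Fintype.card_fin]
    exact this
  have hD : Fintype.card D = k * n ^ (k - 1) := by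
    simp [D, Fintype.card_sigma, Fintype.card_fun, hsub, Finset.sum_const, mul_comm]
  have hScard : S.card = T.card * ℓ := by
    rw [hS, Finset.card_sigma]
    rw [Finset.sum_congr rfl hdirs, Finset.sum_const, smul_eq_mul]
  have key : T.card * ℓ ≤ k * n ^ (k - 1) := by
    rw [← hScard, ← hD]; exact hcard
  rw [le_div_iff₀ (by exact_mod_cast hℓ)]
  exact_mod_cast key
end

section
/- If T is a set of ℓ-rooks in {0,...,n-1}^k (ℓ ≥ 2) such that no two rooks attack a common point and no rook attacks another rook's location, then |T| ≤ C(k,2)·n^{k-2}/C(ℓ,2). -/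
/-- Signature of a rook relative to a 2-set `e` of coordinates: the pair `e` together
with the location of the rook with coordinates in `e` replaced by a default value. -/
def rookSig {n k : ℕ} (hn : 0 < n) (R : Rook n k) (e : Finset (Fin k)) :
    Finset (Fin k) × (Fin k → Fin n) :=
  (e, fun j => if j ∈ e then ⟨0, hn⟩ else R.1 j)

theorem two_packing_singleton_bound (n k ℓ : ℕ) (hn : 0 < n) (hℓ : 2 ≤ ℓ) (hlk : ℓ ≤ k)
    (T : Finset (Rook n k))
    (hdirs : ∀ R ∈ T, R.2.card = ℓ)
    (hdistinct : ∀ R1 ∈ T, ∀ R2 ∈ T, R1 ≠ R2 → R1.1 ≠ R2.1)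
    (hpack : ∀ R1 ∈ T, ∀ R2 ∈ T, R1 ≠ R2 →
      (∀ q : Fin k → Fin n, ¬ (R1.attacks q ∧ R2.attacks q)) ∧ ¬ R1.attacks R2.1) :
    (T.card : ℝ) ≤ (Nat.choose k 2 : ℝ) * (n : ℝ) ^ (k - 2) / (Nat.choose ℓ 2 : ℝ) := by
  classical
  have hC : (0:ℝ) < (Nat.choose ℓ 2 : ℝ) := by exact_mod_cast Nat.choose_pos hℓ
  rw [le_div_iff₀ hC]
  suffices key : T.card * ℓ.choose 2 ≤ k.choose 2 * n ^ (k - 2) by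
    calc (T.card : ℝ) * (Nat.choose ℓ 2 : ℝ)
        = ((T.card * ℓ.choose 2 : ℕ) : ℝ) := by push_cast; ring
      _ ≤ ((k.choose 2 * n ^ (k - 2) : ℕ) : ℝ) := by exact_mod_cast key
      _ = (Nat.choose k 2 : ℝ) * (n:ℝ) ^ (k - 2) := by push_cast; ring
  -- the collision lemma: two distinct rooks cannot share a signature
  have hcol : ∀ R1 ∈ T, ∀ R2 ∈ T, R1 ≠ R2 → ∀ e : Finset (Fin k),
      e ∈ R1.2.powersetCard 2 → e ∈ R2.2.powersetCard 2 →
      (∀ m, m ∉ e → R1.1 m = R2.1 m) → False := by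
    intro R1 h1 R2 h2 hne e he1 he2 hagree
    rw [Finset.mem_powersetCard] at he1 he2
    obtain ⟨i, j, hij, rfl⟩ := Finset.card_eq_two.mp he1.2
    have hiR1 : i ∈ R1.2 := he1.1 (by simp)
    have hjR1 : j ∈ R1.2 := he1.1 (by simp)
    have hiR2 : i ∈ R2.2 := he2.1 (by simp)
    have hjR2 : j ∈ R2.2 := he2.1 (by simp)
    by_cases hi : R1.1 i = R2.1 i
    · by_cases hj : R1.1 j = R2.1 j
      · -- same location: contradicts hdistinct
        apply hdistinct R1 h1 R2 h2 hne
        funext m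
        by_cases hmi : m = i
        · subst hmi; exact hi
        · by_cases hmj : m = j
          · subst hmj; exact hj
          · exact hagree m (by simp [hmi, hmj])
      · -- R1 attacks R2's location via coordinate j
        refine (hpack R1 h1 R2 h2 hne).2 ⟨j, hjR1, fun h => hj h.symm, ?_⟩
        intro m hmj
        by_cases hmi : m = i
        · subst hmi; exact hi.symm
        · exact (hagree m (by simp [hmi, hmj])).symm
    · by_cases hj : R1.1 j = R2.1 j
      · -- R2 attacks R1's location via coordinate i
        refine (hpack R2 h2 R1 h1 (Ne.symm hne)).2 ⟨i, hiR2, hi, ?_⟩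
        intro m hmi
        by_cases hmj : m = j
        · subst hmj; exact hj
        · exact hagree m (by simp [hmi, hmj])
      · -- both rooks attack the common point q
        set q : Fin k → Fin n := fun m => if m = j then R2.1 j else R1.1 m with hq
        refine (hpack R1 h1 R2 h2 hne).1 q ⟨⟨j, hjR1, ?_, ?_⟩, ⟨i, hiR2, ?_, ?_⟩⟩
        · simpa [hq] using fun h => hj h.symm
        · intro m hm; simp [hq, hm]
        · simpa [hq, hij] using hi
        · intro m hm
          by_cases hmj : m = j
          · subst hmj; simp [hq]
          · simp only [hq, if_neg hmj]
            exact hagree m (by simp [hm, hmj])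
  set U : Finset (Finset (Fin k) × (Fin k → Fin n)) :=
    T.biUnion (fun R => (R.2.powersetCard 2).image (rookSig hn R)) with hU
  have hdisj : ∀ R1 ∈ T, ∀ R2 ∈ T, R1 ≠ R2 →
      Disjoint ((R1.2.powersetCard 2).image (rookSig hn R1))
        ((R2.2.powersetCard 2).image (rookSig hn R2)) := by
    intro R1 h1 R2 h2 hne
    rw [Finset.disjoint_left]
    rintro a ha1 ha2
    obtain ⟨e1, he1, rfl⟩ := Finset.mem_image.mp ha1
    obtain ⟨e2, he2, heq⟩ := Finset.mem_image.mp ha2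
    have hee : e2 = e1 := congrArg Prod.fst heq
    subst hee
    refine hcol R1 h1 R2 h2 hne e2 he1 he2 ?_
    intro m hm
    have := congrFun (congrArg Prod.snd heq) m
    simp only [rookSig, if_neg hm] at this
    exact this.symm
  have hcard : U.card = T.card * ℓ.choose 2 := by
    rw [hU, Finset.card_biUnion hdisj]
    have hterm : ∀ R ∈ T, ((R.2.powersetCard 2).image (rookSig hn R)).card = ℓ.choose 2 := by
      intro R hR
      rw [Finset.card_image_of_injOn (fun e1 _ e2 _ h => congrArg Prod.fst h),
        Finset.card_powersetCard, hdirs R hR]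
    rw [Finset.sum_congr rfl hterm, Finset.sum_const, smul_eq_mul]
  rw [← hcard]
  -- upper bound on the number of signatures
  have hsub : U ⊆ ((Finset.univ : Finset (Fin k)).powersetCard 2).biUnion
      (fun e => {e} ×ˢ Fintype.piFinset
        (fun j => if j ∈ e then ({⟨0, hn⟩} : Finset (Fin n)) else Finset.univ)) := by
    intro a ha
    rw [hU, Finset.mem_biUnion] at ha
    rw [Finset.mem_biUnion]
    obtain ⟨R, hR, ha⟩ := ha
    obtain ⟨e, he, rfl⟩ := Finset.mem_image.mp ha
    rw [Finset.mem_powersetCard] at he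
    refine ⟨e, Finset.mem_powersetCard.mpr ⟨Finset.subset_univ e, he.2⟩, ?_⟩
    rw [Finset.mem_product]
    refine ⟨by simp [rookSig], ?_⟩
    rw [Fintype.mem_piFinset]
    intro j
    by_cases hj : j ∈ e <;> simp [rookSig, hj]
  calc U.card ≤ _ := Finset.card_le_card hsub
    _ ≤ ∑ e ∈ (Finset.univ : Finset (Fin k)).powersetCard 2,
        ({e} ×ˢ Fintype.piFinset
          (fun j => if j ∈ e then ({⟨0, hn⟩} : Finset (Fin n)) else Finset.univ)).card :=
      Finset.card_biUnion_le
    _ = ∑ _e ∈ (Finset.univ : Finset (Fin k)).powersetCard 2, n ^ (k - 2) := by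
      refine Finset.sum_congr rfl ?_
      intro e he
      rw [Finset.mem_powersetCard] at he
      rw [Finset.card_product, Finset.card_singleton, one_mul, Fintype.card_piFinset]
      have h1 : ∀ j, ((if j ∈ e then ({⟨0, hn⟩} : Finset (Fin n)) else Finset.univ)).card
          = if j ∈ e then 1 else n := by
        intro j; split <;> simp
      rw [Finset.prod_congr rfl (fun j _ => h1 j),
        ← Finset.prod_mul_prod_compl e (fun j => if j ∈ e then 1 else n)]
      have h2 : ∏ j ∈ e, (if j ∈ e then 1 else n) = 1 := by
        rw [Finset.prod_congr rfl (fun j hj => if_pos hj)]; simp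
      have h3 : ∏ j ∈ eᶜ, (if j ∈ e then 1 else n) = n ^ (k - 2) := by
        rw [Finset.prod_congr rfl (fun j hj => if_neg (Finset.mem_compl.mp hj)),
          Finset.prod_const, Finset.card_compl, Fintype.card_fin, he.2]
      rw [h2, h3, one_mul]
    _ = k.choose 2 * n ^ (k - 2) := by
      rw [Finset.sum_const, smul_eq_mul, Finset.card_powersetCard, Finset.card_univ,
        Fintype.card_fin]
end

section
/- Let ℓ ≥ 2, n ≥ 1, and suppose nonnegative reals a_1,...,a_m with m = n^{k-ℓ} satisfy A := a_1 + ... + a_m ≤ n^{k-1}/(ℓ-1). Define f(x) = ℓnx - (ℓ-1)x²/n^{ℓ-2} for x ≤ n^{ℓ-1}/(ℓ-1) and f(x) = n^ℓ for x ≥ n^{ℓ-1}/(ℓ-1). Then the sum f(a_1) + ... + f(a_m) is at most ℓnA - (ℓ-1)A²/n^{k-2}. -/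
theorem concavity_lemma (n k ℓ : ℕ) (hn : 0 < n) (hℓ : 2 ≤ ℓ) (hlk : ℓ ≤ k)
    (a : Fin (n ^ (k - ℓ)) → ℝ) (ha : ∀ i, 0 ≤ a i)
    (A : ℝ) (hA : A = ∑ i, a i) (hAle : A ≤ (n : ℝ) ^ (k - 1) / ((ℓ : ℝ) - 1)) :
    ∑ i, (if a i ≤ (n : ℝ) ^ (ℓ - 1) / ((ℓ : ℝ) - 1)
          then (ℓ : ℝ) * n * a i - ((ℓ : ℝ) - 1) * (a i) ^ 2 / (n : ℝ) ^ (ℓ - 2)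
          else (n : ℝ) ^ ℓ)
      ≤ (ℓ : ℝ) * n * A - ((ℓ : ℝ) - 1) * A ^ 2 / (n : ℝ) ^ (k - 2) := by
  have hN : (0:ℝ) < n := by exact_mod_cast hn
  have hL : (2:ℝ) ≤ (ℓ:ℝ) := by exact_mod_cast hℓ
  have hL1 : (0:ℝ) < (ℓ:ℝ) - 1 := by linarith
  have hm : (0:ℝ) < (n:ℝ) ^ (k - ℓ) := by positivity
  have hp : (0:ℝ) < (n:ℝ) ^ (ℓ - 2) := by positivity
  set m : ℝ := (n:ℝ) ^ (k - ℓ) with hmdef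
  set p : ℝ := (n:ℝ) ^ (ℓ - 2) with hpdef
  set L : ℝ := (ℓ:ℝ) with hLdef
  have hN1 : (n:ℝ) ^ (ℓ - 1) = n * p := by
    rw [hpdef, show ℓ - 1 = (ℓ - 2) + 1 by omega, pow_succ']
  have hNl : (n:ℝ) ^ ℓ = n ^ 2 * p := by
    rw [hpdef, ← pow_add]; congr 1; omega
  have hk1 : (n:ℝ) ^ (k - 1) = m * ((n:ℝ) * p) := by
    rw [hmdef, hpdef, show k - 1 = (k - ℓ) + ((ℓ - 2) + 1) by omega, pow_add, pow_succ']
  have hk2 : (n:ℝ) ^ (k - 2) = m * p := by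
    rw [hmdef, hpdef, ← pow_add]; congr 1; omega
  rw [hk2]
  clear_value m p L
  obtain ⟨c, hcdef⟩ : ∃ c : ℝ, c = A / m := ⟨_, rfl⟩
  have hA0 : 0 ≤ A := by rw [hA]; exact Finset.sum_nonneg fun i _ => ha i
  have hc0 : 0 ≤ c := hcdef ▸ div_nonneg hA0 hm.le
  have hmc : m * c = A := by rw [hcdef]; field_simp
  have hcle : (L - 1) * c ≤ n * p := by
    have h1 : A ≤ m * (n * p) / (L - 1) := hk1 ▸ hAle
    have h2 : A * (L - 1) ≤ m * (n * p) := (le_div_iff₀ hL1).mp h1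
    have h3 : (L - 1) * c * m ≤ (n * p) * m := by nlinarith [hmc]
    exact le_of_mul_le_mul_right h3 hm
  obtain ⟨s, hsdef⟩ : ∃ s : ℝ, s = L * n - 2 * (L - 1) * c / p := ⟨_, rfl⟩
  have hs : 0 ≤ s := by
    rw [hsdef, sub_nonneg, div_le_iff₀ hp]
    nlinarith [mul_nonneg (sub_nonneg.mpr hL) (mul_pos hN hp).le]
  have key : ∀ i : Fin (n ^ (k - ℓ)),
      (if a i ≤ (n : ℝ) ^ (ℓ - 1) / (L - 1)
        then L * n * a i - (L - 1) * (a i) ^ 2 / p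
        else (n : ℝ) ^ ℓ)
      ≤ (L * n * c - (L - 1) * c ^ 2 / p) + s * (a i - c) := by
    intro i
    by_cases hx : a i ≤ (n : ℝ) ^ (ℓ - 1) / (L - 1)
    · rw [if_pos hx]
      have hdiff : (L * n * c - (L - 1) * c ^ 2 / p) + s * (a i - c)
          - (L * n * a i - (L - 1) * (a i) ^ 2 / p) = (L - 1) * (a i - c) ^ 2 / p := by
        rw [hsdef]; field_simp; ring
      have hpos : 0 ≤ (L - 1) * (a i - c) ^ 2 / p := by positivity
      linarith
    · rw [if_neg hx]
      push_neg at hx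
      rw [hN1, div_lt_iff₀ hL1] at hx
      obtain ⟨cap, hcapdef⟩ : ∃ cap : ℝ, cap = n * p / (L - 1) := ⟨_, rfl⟩
      have hcap_lt : cap ≤ a i := by
        rw [hcapdef, div_le_iff₀ hL1]; nlinarith
      have e1 : (L * n * c - (L - 1) * c ^ 2 / p) + s * (cap - c)
          = (n:ℝ) ^ 2 * p + (L - 1) * (cap - c) ^ 2 / p := by
        rw [hsdef, hcapdef]; field_simp; ring
      have e2 : (n:ℝ) ^ ℓ ≤ (L * n * c - (L - 1) * c ^ 2 / p) + s * (cap - c) := by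
        rw [e1, hNl]
        have : 0 ≤ (L - 1) * (cap - c) ^ 2 / p := by positivity
        linarith
      have e3 : s * (cap - c) ≤ s * (a i - c) := by
        apply mul_le_mul_of_nonneg_left _ hs; linarith
      linarith
  calc ∑ i, (if a i ≤ (n : ℝ) ^ (ℓ - 1) / (L - 1)
          then L * n * a i - (L - 1) * (a i) ^ 2 / p
          else (n : ℝ) ^ ℓ)
      ≤ ∑ i : Fin (n ^ (k - ℓ)), ((L * n * c - (L - 1) * c ^ 2 / p) + s * (a i - c)) :=
        Finset.sum_le_sum fun i _ => key i
    _ = L * n * A - (L - 1) * A ^ 2 / (m * p) := by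
        rw [Finset.sum_add_distrib, Finset.sum_const, ← Finset.mul_sum,
          Finset.sum_sub_distrib, Finset.sum_const, ← hA]
        simp only [Finset.card_univ, Fintype.card_fin, nsmul_eq_mul]
        push_cast
        rw [← hmdef]
        rw [hcdef]
        field_simp
        ring
end

section
/- Suppose X squares are marked in an n×n grid with 0 < X ≤ n², and each marked square is assigned a number equal to either the number of marked squares in its row or the number of marked squares in its column (the choice may differ per square). Then the sum of all assigned numbers is at least X² / (2n - X/n). -/
open Finset

lemma fiber_sum_le {n : ℕ} (M : Finset (Fin n × Fin n)) (p : Fin n × Fin n → Fin n) :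
    ∑ s ∈ M, (1:ℝ) / ((M.filter (fun q => p q = p s)).card) ≤ n := by
  rw [← Finset.sum_fiberwise M p (fun s => (1:ℝ)/((M.filter (fun q => p q = p s)).card))]
  calc ∑ j, ∑ s ∈ M.filter (fun s => p s = j),
        (1:ℝ)/((M.filter (fun q => p q = p s)).card)
      ≤ ∑ _j : Fin n, (1:ℝ) := by
        apply Finset.sum_le_sum
        intro j _
        have hcong : ∀ s ∈ M.filter (fun s => p s = j),
            (1:ℝ)/((M.filter (fun q => p q = p s)).card) =
            (1:ℝ)/((M.filter (fun q => p q = j)).card) := by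
          intro s hs
          rw [Finset.mem_filter] at hs
          rw [hs.2]
        rw [Finset.sum_congr rfl hcong, Finset.sum_const, nsmul_eq_mul]
        rcases Nat.eq_zero_or_pos (M.filter (fun q => p q = j)).card with h | h
        · simp [h]
        · rw [mul_one_div, div_self (by positivity)]
    _ = n := by simp

theorem marked_squares_sum_bound (n X : ℕ) (hn : 0 < n)
    (M : Finset (Fin n × Fin n)) (hX : M.card = X) (hXpos : 0 < X)
    (dir : Fin n × Fin n → Bool) :
    (X : ℝ) ^ 2 / (2 * (n : ℝ) - (X : ℝ) / (n : ℝ)) ≤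
      ∑ s ∈ M, (if dir s then ((M.filter (fun q => q.1 = s.1)).card : ℝ)
                else ((M.filter (fun q => q.2 = s.2)).card : ℝ)) := by
  have hn' : (0:ℝ) < n := by exact_mod_cast hn
  set R : Fin n × Fin n → ℝ := fun s => ((M.filter (fun q => q.1 = s.1)).card : ℝ) with hR
  set C : Fin n × Fin n → ℝ := fun s => ((M.filter (fun q => q.2 = s.2)).card : ℝ) with hC
  set v : Fin n × Fin n → ℝ := fun s => if dir s then R s else C s with hv
  -- basic pointwise facts
  have hR1 : ∀ s ∈ M, (1:ℝ) ≤ R s := by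
    intro s hs
    have : s ∈ M.filter (fun q => q.1 = s.1) := Finset.mem_filter.2 ⟨hs, rfl⟩
    have := Finset.card_pos.2 ⟨s, this⟩
    simp only [hR]
    exact_mod_cast this
  have hC1 : ∀ s ∈ M, (1:ℝ) ≤ C s := by
    intro s hs
    have : s ∈ M.filter (fun q => q.2 = s.2) := Finset.mem_filter.2 ⟨hs, rfl⟩
    have := Finset.card_pos.2 ⟨s, this⟩
    simp only [hC]
    exact_mod_cast this
  have hRn : ∀ s, R s ≤ n := by
    intro s
    have : (M.filter (fun q => q.1 = s.1)).card ≤ (Finset.univ : Finset (Fin n)).card := by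
      apply Finset.card_le_card_of_injOn (fun q => q.2) (fun q _ => Finset.mem_univ _)
      intro a ha b hb hab
      rw [Finset.coe_filter, Set.mem_setOf_eq] at ha hb
      exact Prod.ext (ha.2.trans hb.2.symm) hab
    simp only [hR]
    calc ((M.filter (fun q => q.1 = s.1)).card : ℝ) ≤ ((Finset.univ : Finset (Fin n)).card : ℝ) := by
          exact_mod_cast this
      _ = n := by simp
  have hCn : ∀ s, C s ≤ n := by
    intro s
    have : (M.filter (fun q => q.2 = s.2)).card ≤ (Finset.univ : Finset (Fin n)).card := by
      apply Finset.card_le_card_of_injOn (fun q => q.1) (fun q _ => Finset.mem_univ _)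
      intro a ha b hb hab
      rw [Finset.coe_filter, Set.mem_setOf_eq] at ha hb
      exact Prod.ext hab (ha.2.trans hb.2.symm)
    simp only [hC]
    calc ((M.filter (fun q => q.2 = s.2)).card : ℝ) ≤ ((Finset.univ : Finset (Fin n)).card : ℝ) := by
          exact_mod_cast this
      _ = n := by simp
  have hv1 : ∀ s ∈ M, (1:ℝ) ≤ v s := by
    intro s hs
    by_cases h : dir s <;> simp [hv, h, hR1 s hs, hC1 s hs]
  -- pointwise key inequality
  have hkey : ∀ s ∈ M, 1 / v s ≤ 1 / R s + 1 / C s - 1 / n := by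
    intro s hs
    have hRpos : (0:ℝ) < R s := lt_of_lt_of_le one_pos (hR1 s hs)
    have hCpos : (0:ℝ) < C s := lt_of_lt_of_le one_pos (hC1 s hs)
    have h1 : (1:ℝ)/n ≤ 1 / R s := one_div_le_one_div_of_le hRpos (hRn s)
    have h2 : (1:ℝ)/n ≤ 1 / C s := one_div_le_one_div_of_le hCpos (hCn s)
    by_cases h : dir s
    · have : v s = R s := by simp [hv, h]
      rw [this]; linarith
    · have : v s = C s := by simp [hv, h]
      rw [this]; linarith
  -- bound on the sum of reciprocals
  have hRsum : ∑ s ∈ M, 1 / R s ≤ n := by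
    have := fiber_sum_le M Prod.fst
    simpa [hR, one_div] using this
  have hCsum : ∑ s ∈ M, 1 / C s ≤ n := by
    have := fiber_sum_le M Prod.snd
    simpa [hC, one_div] using this
  have hSle : ∑ s ∈ M, 1 / v s ≤ 2 * (n:ℝ) - (X:ℝ) / n := by
    calc ∑ s ∈ M, 1 / v s ≤ ∑ s ∈ M, (1 / R s + 1 / C s - 1 / n) :=
          Finset.sum_le_sum hkey
      _ = (∑ s ∈ M, 1 / R s) + (∑ s ∈ M, 1 / C s) - (X:ℝ) * (1/n) := by
          rw [Finset.sum_sub_distrib, Finset.sum_add_distrib, Finset.sum_const,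
            nsmul_eq_mul, hX]
      _ ≤ (n:ℝ) + n - X * (1/n) := by linarith
      _ = 2 * (n:ℝ) - (X:ℝ) / n := by ring
  -- positivity of sums
  have hSpos : 0 < ∑ s ∈ M, 1 / v s := by
    apply Finset.sum_pos
    · intro s hs
      exact div_pos one_pos (lt_of_lt_of_le one_pos (hv1 s hs))
    · exact Finset.card_pos.1 (hX ▸ hXpos)
  -- Sedrakyan / Cauchy-Schwarz
  have hsed : (X:ℝ)^2 / (∑ s ∈ M, 1 / v s) ≤ ∑ s ∈ M, v s := by
    have h := Finset.sq_sum_div_le_sum_sq_div M (fun _ => (1:ℝ))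
      (g := fun s => 1 / v s)
      (fun s hs => div_pos one_pos (lt_of_lt_of_le one_pos (hv1 s hs)))
    have hsum1 : ∑ _s ∈ M, (1:ℝ) = (X:ℝ) := by simp [hX]
    have heq : ∀ s ∈ M, (1:ℝ)^2 / (1 / v s) = v s := by
      intro s hs
      have : v s ≠ 0 := ne_of_gt (lt_of_lt_of_le one_pos (hv1 s hs))
      field_simp
    rw [hsum1, Finset.sum_congr rfl heq] at h
    exact h
  have hvsum : ∑ s ∈ M, v s = ∑ s ∈ M, (if dir s then ((M.filter (fun q => q.1 = s.1)).card : ℝ)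
      else ((M.filter (fun q => q.2 = s.2)).card : ℝ)) := rfl
  rw [← hvsum]
  refine le_trans ?_ hsed
  apply div_le_div_of_nonneg_left (by positivity) hSpos hSle
end

section
/- Suppose X ≥ 1 squares are marked in an n×n grid. For each marked square i let c_i be either the number of marked squares in its row or the number of marked squares in its column, and let n_i be the count in the other direction. Then the sum over all marked squares of 1/c_i is at most 2n - X/n. -/
theorem marked_squares_reciprocal_sum_bound (n X : ℕ) (hn : 0 < n)
    (M : Finset (Fin n × Fin n)) (hX : M.card = X) (hXpos : 1 ≤ X)
    (dir : Fin n × Fin n → Bool) :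
    ∑ s ∈ M, (1 / (if dir s then ((M.filter (fun q => q.1 = s.1)).card : ℝ)
                   else ((M.filter (fun q => q.2 = s.2)).card : ℝ)))
      ≤ 2 * (n : ℝ) - (X : ℝ) / (n : ℝ) := by
  classical
  set r : Fin n × Fin n → ℝ := fun s => ((M.filter (fun q => q.1 = s.1)).card : ℝ) with hr
  set c : Fin n × Fin n → ℝ := fun s => ((M.filter (fun q => q.2 = s.2)).card : ℝ) with hc
  -- basic bounds on counts
  have hr1 : ∀ s ∈ M, (1 : ℝ) ≤ r s := by
    intro s hs
    have : s ∈ M.filter (fun q => q.1 = s.1) := Finset.mem_filter.2 ⟨hs, rfl⟩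
    have hpos : 0 < (M.filter (fun q => q.1 = s.1)).card := Finset.card_pos.2 ⟨s, this⟩
    simp only [hr]
    exact_mod_cast hpos
  have hc1 : ∀ s ∈ M, (1 : ℝ) ≤ c s := by
    intro s hs
    have : s ∈ M.filter (fun q => q.2 = s.2) := Finset.mem_filter.2 ⟨hs, rfl⟩
    have hpos : 0 < (M.filter (fun q => q.2 = s.2)).card := Finset.card_pos.2 ⟨s, this⟩
    simp only [hc]
    exact_mod_cast hpos
  have hrn : ∀ s, r s ≤ (n : ℝ) := by
    intro s
    have : (M.filter (fun q => q.1 = s.1)).card ≤ (Finset.univ : Finset (Fin n)).card := by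
      apply Finset.card_le_card_of_injOn (fun q => q.2) (fun q _ => Finset.mem_univ _)
      intro a ha b hb hab
      simp only [Finset.mem_coe, Finset.mem_filter] at ha hb
      exact Prod.ext (ha.2.trans hb.2.symm) hab
    simp only [hr]
    simpa using (Nat.cast_le (α := ℝ)).2 this
  have hcn : ∀ s, c s ≤ (n : ℝ) := by
    intro s
    have : (M.filter (fun q => q.2 = s.2)).card ≤ (Finset.univ : Finset (Fin n)).card := by
      apply Finset.card_le_card_of_injOn (fun q => q.1) (fun q _ => Finset.mem_univ _)
      intro a ha b hb hab
      simp only [Finset.mem_coe, Finset.mem_filter] at ha hb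
      exact Prod.ext hab (ha.2.trans hb.2.symm)
    simp only [hc]
    simpa using (Nat.cast_le (α := ℝ)).2 this
  -- row reciprocal sum ≤ n
  have hrow : ∑ s ∈ M, 1 / r s ≤ (n : ℝ) := by
    rw [← Finset.sum_fiberwise_of_maps_to (g := fun q : Fin n × Fin n => q.1)
      (fun x _ => Finset.mem_univ x.1) (fun s => 1 / r s)]
    calc ∑ y : Fin n, ∑ x ∈ M.filter (fun x => x.1 = y), 1 / r x
        ≤ ∑ _y : Fin n, (1 : ℝ) := by
          apply Finset.sum_le_sum
          intro y _
          have heq : ∀ x ∈ M.filter (fun x => x.1 = y),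
              1 / r x = 1 / ((M.filter (fun q => q.1 = y)).card : ℝ) := by
            intro x hx
            have hx' := Finset.mem_filter.1 hx
            simp [hr, hx'.2]
          rw [Finset.sum_congr rfl heq, Finset.sum_const, nsmul_eq_mul]
          rcases Nat.eq_zero_or_pos (M.filter (fun q => q.1 = y)).card with h | h
          · simp [h]
          · rw [mul_one_div, div_self (by exact_mod_cast h.ne')]
      _ = (n : ℝ) := by simp
  -- column reciprocal sum ≤ n
  have hcol : ∑ s ∈ M, 1 / c s ≤ (n : ℝ) := by
    rw [← Finset.sum_fiberwise_of_maps_to (g := fun q : Fin n × Fin n => q.2)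
      (fun x _ => Finset.mem_univ x.2) (fun s => 1 / c s)]
    calc ∑ y : Fin n, ∑ x ∈ M.filter (fun x => x.2 = y), 1 / c x
        ≤ ∑ _y : Fin n, (1 : ℝ) := by
          apply Finset.sum_le_sum
          intro y _
          have heq : ∀ x ∈ M.filter (fun x => x.2 = y),
              1 / c x = 1 / ((M.filter (fun q => q.2 = y)).card : ℝ) := by
            intro x hx
            have hx' := Finset.mem_filter.1 hx
            simp [hc, hx'.2]
          rw [Finset.sum_congr rfl heq, Finset.sum_const, nsmul_eq_mul]
          rcases Nat.eq_zero_or_pos (M.filter (fun q => q.2 = y)).card with h | h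
          · simp [h]
          · rw [mul_one_div, div_self (by exact_mod_cast h.ne')]
      _ = (n : ℝ) := by simp
  -- lower bound on the "other direction" reciprocal sum
  have hother : (X : ℝ) / (n : ℝ) ≤ ∑ s ∈ M, (if dir s then 1 / c s else 1 / r s) := by
    have hterm : ∀ s ∈ M, (1 : ℝ) / n ≤ (if dir s then 1 / c s else 1 / r s) := by
      intro s hs
      by_cases h : dir s
      · simp only [h, if_true]
        exact one_div_le_one_div_of_le (lt_of_lt_of_le one_pos (hc1 s hs)) (hcn s)
      · simp only [h, if_false]
        exact one_div_le_one_div_of_le (lt_of_lt_of_le one_pos (hr1 s hs)) (hrn s)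
    calc (X : ℝ) / n = M.card * ((1 : ℝ) / n) := by
          rw [hX]; ring
      _ = ∑ _s ∈ M, (1 : ℝ) / n := by rw [Finset.sum_const, nsmul_eq_mul]
      _ ≤ _ := Finset.sum_le_sum hterm
  -- pointwise identity and combine
  have hsplit : ∑ s ∈ M, (1 / (if dir s then r s else c s))
      = ∑ s ∈ M, 1 / r s + ∑ s ∈ M, 1 / c s
        - ∑ s ∈ M, (if dir s then 1 / c s else 1 / r s) := by
    rw [← Finset.sum_add_distrib, ← Finset.sum_sub_distrib]
    apply Finset.sum_congr rfl
    intro s _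
    by_cases h : dir s <;> simp [h] <;> ring
  show ∑ s ∈ M, (1 / (if dir s then r s else c s)) ≤ 2 * (n : ℝ) - (X : ℝ) / n
  rw [hsplit]
  linarith
end

section
/- Let k ≥ 2 and n > k(k-1). Then there exists a set of C(k,2)·(n - k(k-1) - 1)^{k-2} 2-rooks in {0,...,n-1}^k such that no two rooks attack a common point and no rook attacks another's location. Concretely, for each pair i < j, take all points whose i-th coordinate is 2i-2+(j-1)(j-2), whose j-th coordinate is 2i-1+(j-1)(j-2), and whose other coordinates range over [k(k-1)+1, n-1], each attacking in directions i and j. -/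
open Finset

/-- The paper's values `2i-2+(j-1)(j-2)` and `2i-1+(j-1)(j-2)`, with `0`-indexed `i < j`.
For fixed `j` they fill the interval `[j(j-1), (j+1)j)`. -/
def pairCode (i j e : ℕ) : ℕ := j * (j - 1) + 2 * i + e

lemma pairCode_inj {i j e i' j' e' : ℕ} (hij : i < j) (hij' : i' < j') (he : e < 2)
    (he' : e' < 2) (h : pairCode i j e = pairCode i' j' e') : i = i' ∧ j = j' ∧ e = e' := by
  obtain ⟨a, rfl⟩ : ∃ a, j = a + 1 := ⟨j - 1, by omega⟩
  obtain ⟨b, rfl⟩ : ∃ b, j' = b + 1 := ⟨j' - 1, by omega⟩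
  simp only [pairCode, Nat.add_sub_cancel] at h
  obtain rfl : a = b := by
    rcases lt_trichotomy a b with hab | hab | hab
    · nlinarith
    · exact hab
    · nlinarith
  omega

lemma pairCode_lt {i j e k : ℕ} (hij : i < j) (hjk : j < k) (he : e < 2) :
    pairCode i j e < k * (k - 1) := by
  obtain ⟨a, rfl⟩ : ∃ a, j = a + 1 := ⟨j - 1, by omega⟩
  obtain ⟨b, rfl⟩ : ∃ b, k = b + 1 := ⟨k - 1, by omega⟩
  simp only [pairCode, Nat.add_sub_cancel]
  nlinarith

lemma eq_and_eq_of_pair_eq {α : Type*} [LinearOrder α] {a b c d : α} (hab : a < b) (hcd : c < d)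
    (h : ({a, b} : Finset α) = {c, d}) : a = c ∧ b = d := by
  have h' : ({a, b} : Set α) = {c, d} := by simpa using congrArg ((↑) : Finset α → Set α) h
  rcases Set.pair_eq_pair_iff.1 h' with h'' | ⟨rfl, rfl⟩
  · exact h''
  · exact absurd hab (lt_asymm hcd)

lemma card_piFinset_eq_pow {ι α : Type*} [Fintype ι] [DecidableEq ι] {t : ι → Finset α}
    (s : Finset ι) {N : ℕ} (hs : ∀ l ∈ s, #(t l) = 1) (hsc : ∀ l ∉ s, #(t l) = N) :
    #(Fintype.piFinset t) = N ^ (Fintype.card ι - #s) := by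
  rw [Fintype.card_piFinset, ← prod_mul_prod_compl s, prod_eq_one hs,
    prod_congr rfl fun l hl => hsc l (mem_compl.1 hl), prod_const, card_compl, one_mul]

lemma Fin.card_filter_val_eq {n c : ℕ} (hc : c < n) : #{a : Fin n | (a : ℕ) = c} = 1 :=
  card_eq_one.2 ⟨⟨c, hc⟩, by ext a; simp [Fin.ext_iff]⟩

lemma Fin.card_filter_lt_val (n m : ℕ) : #{a : Fin n | m < (a : ℕ)} = n - m - 1 := by
  rcases lt_or_ge m n with hm | hm
  · have : ({a : Fin n | m < (a : ℕ)} : Finset (Fin n)) = Ioi ⟨m, hm⟩ := by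
      ext a; simp [Fin.lt_def]
    rw [this, Fin.card_Ioi, Fin.val_mk]
    omega
  · rw [card_eq_zero.2 (filter_eq_empty_iff.2 fun a _ => by omega)]
    omega

namespace TwoPacking

variable {n k : ℕ}

def blockValues (n k : ℕ) (i j l : Fin k) : Finset (Fin n) :=
  {a | if l = i then (a : ℕ) = pairCode i j 0
    else if l = j then (a : ℕ) = pairCode i j 1 else k * (k - 1) < a}

def block (n k : ℕ) (i j : Fin k) : Finset (Rook n k) :=
  (Fintype.piFinset (blockValues n k i j)).map (Function.Embedding.sectL _ {i, j})

def packing (n k : ℕ) : Finset (Rook n k) :=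
  ({p | p.1 < p.2} : Finset (Fin k × Fin k)).biUnion fun p => block n k p.1 p.2

lemma mem_block {i j : Fin k} (hij : i ≠ j) {R : Rook n k} :
    R ∈ block n k i j ↔ R.2 = {i, j} ∧ (R.1 i : ℕ) = pairCode i j 0 ∧
      (R.1 j : ℕ) = pairCode i j 1 ∧ ∀ l, l ≠ i → l ≠ j → k * (k - 1) < R.1 l := by
  obtain ⟨x, s⟩ := R
  simp only [block, mem_map, Fintype.mem_piFinset, blockValues, mem_filter, mem_univ, true_and,
    Function.Embedding.sectL_apply, Prod.mk.injEq]
  constructor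
  · rintro ⟨x, hx, rfl, rfl⟩
    exact ⟨rfl, by simpa using hx i, by simpa [hij.symm] using hx j,
      fun l hli hlj => by simpa [hli, hlj] using hx l⟩
  · rintro ⟨rfl, hi, hj, hl⟩
    refine ⟨x, fun l => ?_, rfl, rfl⟩
    split_ifs with hli hlj
    · exact hli ▸ hi
    · exact hlj ▸ hj
    · exact hl l hli hlj

lemma card_block {i j : Fin k} (hij : i < j) (hn : k * (k - 1) < n) :
    #(block n k i j) = (n - k * (k - 1) - 1) ^ (k - 2) := by
  have hcode : ∀ e < 2, pairCode i j e < n := fun e he => (pairCode_lt hij j.isLt he).trans hn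
  rw [block, card_map, card_piFinset_eq_pow {i, j}, Fintype.card_fin, card_pair hij.ne]
  · intro l hl
    rcases mem_insert.1 hl with rfl | hl
    · simpa [blockValues] using Fin.card_filter_val_eq (hcode 0 (by norm_num))
    · obtain rfl := mem_singleton.1 hl
      simpa [blockValues, hij.ne'] using Fin.card_filter_val_eq (hcode 1 (by norm_num))
  · intro l hl
    simp only [mem_insert, mem_singleton, not_or] at hl
    simpa [blockValues, hl.1, hl.2] using Fin.card_filter_lt_val n (k * (k - 1))

lemma card_packing (hn : k * (k - 1) < n) :
    #(packing n k) = k.choose 2 * (n - k * (k - 1) - 1) ^ (k - 2) := by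
  rw [packing, card_biUnion, sum_congr rfl fun p hp => card_block (mem_filter.1 hp).2 hn,
    sum_const, Fintype.card_product_filter_lt, Fintype.card_fin, smul_eq_mul]
  rintro ⟨i, j⟩ hij ⟨i', j'⟩ hij' hne
  simp only [coe_filter, mem_univ, true_and, Set.mem_ofPred_eq] at hij hij'
  refine disjoint_left.2 fun R hR hR' => hne ?_
  obtain ⟨rfl, rfl⟩ := eq_and_eq_of_pair_eq hij hij'
    (((mem_block hij.ne).1 hR).1.symm.trans ((mem_block hij'.ne).1 hR').1)
  rfl

lemma mem_packing {R : Rook n k} :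
    R ∈ packing n k ↔ ∃ i j : Fin k, i < j ∧ R ∈ block n k i j := by
  simp [packing]

lemma card_dirs_of_mem_packing {R : Rook n k} (hR : R ∈ packing n k) : #R.2 = 2 := by
  obtain ⟨i, j, hij, hR⟩ := mem_packing.1 hR
  rw [((mem_block hij.ne).1 hR).1, card_pair hij.ne]

lemma val_eq_of_mem_block {i j : Fin k} (hij : i ≠ j) {R R' : Rook n k}
    (hR : R ∈ block n k i j) (hR' : R' ∈ block n k i j) {l : Fin k}
    (hl : l ∈ ({i, j} : Finset (Fin k))) : R.1 l = R'.1 l := by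
  obtain ⟨-, hi, hj, -⟩ := (mem_block hij).1 hR
  obtain ⟨-, hi', hj', -⟩ := (mem_block hij).1 hR'
  rcases mem_insert.1 hl with rfl | hl
  · exact Fin.ext (hi.trans hi'.symm)
  · obtain rfl := mem_singleton.1 hl
    exact Fin.ext (hj.trans hj'.symm)

lemma pair_eq_of_mem_block {i j i' j' : Fin k} (hij : i < j) (hij' : i' < j') {R R' : Rook n k}
    (hR : R ∈ block n k i j) (hR' : R' ∈ block n k i' j') {l : Fin k} (hl : l ∈ R.2)
    (hRR' : R.1 l = R'.1 l) : i = i' ∧ j = j' := by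
  obtain ⟨hdirs, hi, hj, -⟩ := (mem_block hij.ne).1 hR
  obtain ⟨-, hi', hj', hfree'⟩ := (mem_block hij'.ne).1 hR'
  obtain ⟨e, he, hl⟩ : ∃ e < 2, (R'.1 l : ℕ) = pairCode i j e := by
    rw [← hRR']
    rcases mem_insert.1 (hdirs ▸ hl) with rfl | hl
    · exact ⟨0, by norm_num, hi⟩
    · exact ⟨1, by norm_num, mem_singleton.1 hl ▸ hj⟩
  obtain ⟨e', he', hl'⟩ : ∃ e' < 2, (R'.1 l : ℕ) = pairCode i' j' e' := by
    by_cases hli : l = i'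
    · exact ⟨0, by norm_num, hli ▸ hi'⟩
    by_cases hlj : l = j'
    · exact ⟨1, by norm_num, hlj ▸ hj'⟩
    have := hfree' l hli hlj
    have := pairCode_lt hij j.isLt he
    omega
  obtain ⟨hi, hj, -⟩ := pairCode_inj hij hij' he he' (hl.symm.trans hl')
  exact ⟨Fin.ext hi, Fin.ext hj⟩

theorem eq_of_eqOn_compl {R₁ R₂ : Rook n k} (h₁ : R₁ ∈ packing n k) (h₂ : R₂ ∈ packing n k)
    {T : Finset (Fin k)} (hT : T ⊆ R₁.2 ∪ R₂.2) (hTcard : #T ≤ 2)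
    (hagree : ∀ l ∉ T, R₁.1 l = R₂.1 l) : R₁ = R₂ := by
  obtain ⟨i₁, j₁, hij₁, hR₁⟩ := mem_packing.1 h₁
  obtain ⟨i₂, j₂, hij₂, hR₂⟩ := mem_packing.1 h₂
  have hdirs₁ := ((mem_block hij₁.ne).1 hR₁).1
  have hdirs₂ := ((mem_block hij₂.ne).1 hR₂).1
  by_cases hpair : i₁ = i₂ ∧ j₁ = j₂
  · obtain ⟨rfl, rfl⟩ := hpair
    refine Prod.ext (funext fun l => ?_) (hdirs₁.trans hdirs₂.symm)
    by_cases hl : l ∈ T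
    · exact val_eq_of_mem_block hij₁.ne hR₁ hR₂ (by simpa [hdirs₁, hdirs₂] using hT hl)
    · exact hagree l hl
  · have hsub₁ : R₁.2 ⊆ T := fun l hl => by_contra fun hlT =>
      hpair (pair_eq_of_mem_block hij₁ hij₂ hR₁ hR₂ hl (hagree l hlT))
    have hsub₂ : R₂.2 ⊆ T := fun l hl => by_contra fun hlT => hpair <| by
      obtain ⟨hi, hj⟩ := pair_eq_of_mem_block hij₂ hij₁ hR₂ hR₁ hl (hagree l hlT).symm
      exact ⟨hi.symm, hj.symm⟩
    have hcard₁ := card_dirs_of_mem_packing h₁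
    have hcard₂ := card_dirs_of_mem_packing h₂
    have hdirs : R₁.2 = R₂.2 := (eq_of_subset_of_card_le hsub₁ (by omega)).trans
      (eq_of_subset_of_card_le hsub₂ (by omega)).symm
    exact (hpair (eq_and_eq_of_pair_eq hij₁ hij₂ (hdirs₁.symm.trans (hdirs.trans hdirs₂)))).elim

end TwoPacking

open TwoPacking in
theorem two_packing_construction_general (n k : ℕ) (hn : k * (k - 1) < n) :
    ∃ S : Finset (Rook n k),
      S.card = Nat.choose k 2 * (n - k * (k - 1) - 1) ^ (k - 2) ∧
      (∀ R ∈ S, R.2.card = 2) ∧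
      (∀ R1 ∈ S, ∀ R2 ∈ S, R1 ≠ R2 →
        (∀ q : Fin k → Fin n, ¬ (R1.attacks q ∧ R2.attacks q)) ∧
        ¬ R1.attacks R2.1 ∧ R1.1 ≠ R2.1) := by
  refine ⟨packing n k, card_packing hn, fun R hR => card_dirs_of_mem_packing hR,
    fun R₁ h₁ R₂ h₂ hne => ⟨?_, ?_, ?_⟩⟩
  · rintro q ⟨⟨l₁, hl₁, -, hq₁⟩, ⟨l₂, hl₂, -, hq₂⟩⟩
    refine hne (eq_of_eqOn_compl h₁ h₂ (T := {l₁, l₂}) ?_ card_le_two fun l hl => ?_)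
    · exact insert_subset (mem_union_left _ hl₁) (singleton_subset_iff.2 (mem_union_right _ hl₂))
    · simp only [mem_insert, mem_singleton, not_or] at hl
      rw [← hq₁ l hl.1, hq₂ l hl.2]
  · rintro ⟨l, hl, -, hq⟩
    refine hne (eq_of_eqOn_compl h₁ h₂ (T := {l}) (singleton_subset_iff.2 (mem_union_left _ hl))
      (by simp) fun m hm => (hq m (by simpa using hm)).symm)
  · intro hloc
    exact hne (eq_of_eqOn_compl h₁ h₂ (empty_subset _) (by simp) fun l _ => congrFun hloc l)

theorem two_packing_construction (n k : ℕ) (hk : 2 ≤ k) (hn : k * (k - 1) < n) :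
    ∃ S : Finset (Rook n k),
      S.card = Nat.choose k 2 * (n - k * (k - 1) - 1) ^ (k - 2) ∧
      (∀ R ∈ S, R.2.card = 2) ∧
      (∀ R1 ∈ S, ∀ R2 ∈ S, R1 ≠ R2 →
        (∀ q : Fin k → Fin n, ¬ (R1.attacks q ∧ R2.attacks q)) ∧
        ¬ R1.attacks R2.1 ∧ R1.1 ≠ R2.1) :=
  two_packing_construction_general n k hn
end

section
/- For all positive integers m, n, k, ℓ with ℓ ≤ k: a_{mn,k,ℓ} ≤ m^{k-1}·a_{n,k,ℓ}, where a_{N,k,ℓ} denotes the minimum number of ℓ-rooks needed to cover {0,...,N-1}^k. -/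
/-- A rook covers itself and every point differing from it in exactly one of its
chosen coordinates. -/
def Rook.covers {n k : ℕ} (R : Rook n k) (q : Fin k → Fin n) : Prop :=
  q = R.1 ∨ ∃ i ∈ R.2, q i ≠ R.1 i ∧ ∀ j, j ≠ i → q j = R.1 j

/-- `S` is a covering of the hypercube by ℓ-rooks. -/
def IsCover (n k ℓ : ℕ) (S : Finset (Rook n k)) : Prop :=
  (∀ R ∈ S, R.2.card = ℓ) ∧ ∀ q : Fin k → Fin n, ∃ R ∈ S, R.covers q

/-- `aval n k ℓ` : the minimum number of ℓ-rooks needed to cover `{0,...,n-1}^k`. -/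
noncomputable def aval (n k ℓ : ℕ) : ℕ :=
  sInf {s | ∃ S : Finset (Rook n k), IsCover n k ℓ S ∧ S.card = s}


/-!
Write each coordinate of a point of `{0,...,mn-1}^k` as a pair (block, offset) in
`{0,...,m-1} × {0,...,n-1}`. A cover of `{0,...,n-1}^k` attacks the offset part by some rook
`R` along one of its directions `i`. The diagonal code meets every line of `{0,...,m-1}^k`
exactly once, so it has `m^(k-1)` points and one of them agrees with the block part off
coordinate `i`; the copy of `R` placed in that block attacks the point along `i`.
-/

open Finset

section DiagonalCode

variable (ι α : Type*) [Fintype ι] [DecidableEq ι] [AddCommGroup α] [Fintype α] [DecidableEq α]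

def diagonalCode : Finset (ι → α) :=
  univ.filter fun x => ∑ j, x j = 0

variable {ι α}

theorem mem_diagonalCode {x : ι → α} : x ∈ diagonalCode ι α ↔ ∑ j, x j = 0 := by
  simp [diagonalCode]

theorem exists_mem_diagonalCode_agree_off (a : ι → α) (i : ι) :
    ∃ c ∈ diagonalCode ι α, ∀ j ≠ i, c j = a j := by
  refine ⟨a - Pi.single i (∑ j, a j), ?_, fun j hj => by simp [hj]⟩
  simp [mem_diagonalCode, sum_sub_distrib]

theorem eq_of_mem_diagonalCode_of_agree_off {x y : ι → α} (hx : x ∈ diagonalCode ι α)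
    (hy : y ∈ diagonalCode ι α) (i : ι) (hxy : ∀ j ≠ i, x j = y j) : x = y := by
  funext j
  by_cases hj : j = i
  · subst hj
    have hrest : ∑ l ∈ univ.erase j, x l = ∑ l ∈ univ.erase j, y l :=
      sum_congr rfl fun l hl => hxy l (ne_of_mem_erase hl)
    have hsum := (add_sum_erase univ x (mem_univ j)).trans (mem_diagonalCode.1 hx)
    rw [hrest, ← (add_sum_erase univ y (mem_univ j)).trans (mem_diagonalCode.1 hy)] at hsum
    exact add_right_cancel hsum
  · exact hxy j hj

theorem card_diagonalCode_le [Nonempty ι] :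
    #(diagonalCode ι α) ≤ Fintype.card α ^ (Fintype.card ι - 1) := by
  obtain ⟨i⟩ := ‹Nonempty ι›
  calc #(diagonalCode ι α) ≤ Fintype.card ({j // j ≠ i} → α) :=
        card_le_card_of_injOn (fun x j => x j) (fun _ _ => by simp)
          fun x hx y hy hxy => eq_of_mem_diagonalCode_of_agree_off hx hy i
            fun j hj => congr_fun hxy ⟨j, hj⟩
    _ = Fintype.card α ^ (Fintype.card ι - 1) := by
        simp [Fintype.card_subtype_compl]

end DiagonalCode

section Rooks

variable {m n k ℓ : ℕ}

theorem Rook.covers_iff_exists_agree_off {R : Rook n k} (hR : R.2.Nonempty)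
    {q : Fin k → Fin n} : R.covers q ↔ ∃ i ∈ R.2, ∀ j ≠ i, q j = R.1 j := by
  constructor
  · rintro (rfl | ⟨i, hi, -, hq⟩)
    · obtain ⟨i, hi⟩ := hR
      exact ⟨i, hi, fun _ _ => rfl⟩
    · exact ⟨i, hi, hq⟩
  · rintro ⟨i, hi, hq⟩
    by_cases hqi : q i = R.1 i
    · left
      funext j
      by_cases hj : j = i
      · rwa [hj]
      · exact hq j hj
    · exact Or.inr ⟨i, hi, hqi, hq⟩

theorem aval_le_card {S : Finset (Rook n k)} (hS : IsCover n k ℓ S) : aval n k ℓ ≤ #S :=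
  Nat.sInf_le ⟨S, hS, rfl⟩

theorem exists_isCover_card_eq_aval (n : ℕ) (hℓk : ℓ ≤ k) :
    ∃ S : Finset (Rook n k), IsCover n k ℓ S ∧ #S = aval n k ℓ := by
  obtain ⟨T, -, hT⟩ := exists_subset_card_eq (s := (univ : Finset (Fin k))) (by simpa using hℓk)
  have hcover : IsCover n k ℓ (univ.image fun p => (p, T)) :=
    ⟨by simp [hT], fun q => ⟨(q, T), mem_image_of_mem _ (mem_univ q), Or.inl rfl⟩⟩
  exact Nat.sInf_mem (s := {s | ∃ S : Finset (Rook n k), IsCover n k ℓ S ∧ #S = s})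
    ⟨_, _, hcover, rfl⟩

/-- Block `c j` and offset `p j` give the coordinate `n * c j + p j`. -/
def blowUpPoint (c : Fin k → Fin m) (p : Fin k → Fin n) : Fin k → Fin (m * n) :=
  fun j => finProdFinEquiv (c j, p j)

def Rook.blowUp (c : Fin k → Fin m) (R : Rook n k) : Rook (m * n) k :=
  (blowUpPoint c R.1, R.2)

def blowUp (C : Finset (Fin k → Fin m)) (S : Finset (Rook n k)) : Finset (Rook (m * n) k) :=
  (C ×ˢ S).image fun cR => cR.2.blowUp cR.1

theorem card_blowUp_le (C : Finset (Fin k → Fin m)) (S : Finset (Rook n k)) :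
    #(blowUp C S) ≤ #C * #S :=
  card_image_le.trans (card_product C S).le

theorem isCover_blowUp {C : Finset (Fin k → Fin m)} {S : Finset (Rook n k)}
    (hC : ∀ (a : Fin k → Fin m) (i : Fin k), ∃ c ∈ C, ∀ j ≠ i, c j = a j)
    (hS : IsCover n k ℓ S) (hℓ : 0 < ℓ) : IsCover (m * n) k ℓ (blowUp C S) := by
  refine ⟨?_, fun q => ?_⟩
  · simp only [blowUp, mem_image, mem_product]
    rintro _ ⟨⟨c, R⟩, ⟨-, hR⟩, rfl⟩
    exact hS.1 R hR
  · let a : Fin k → Fin m := fun j => (finProdFinEquiv.symm (q j)).1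
    let b : Fin k → Fin n := fun j => (finProdFinEquiv.symm (q j)).2
    obtain ⟨R, hRS, hRb⟩ := hS.2 b
    have hR : R.2.Nonempty := card_pos.1 (hS.1 R hRS ▸ hℓ)
    obtain ⟨i, hi, hbR⟩ := (Rook.covers_iff_exists_agree_off hR).1 hRb
    obtain ⟨c, hc, hca⟩ := hC a i
    refine ⟨R.blowUp c, mem_image.2 ⟨(c, R), mem_product.2 ⟨hc, hRS⟩, rfl⟩,
      (Rook.covers_iff_exists_agree_off (R := R.blowUp c) hR).2 ⟨i, hi, fun j hj => ?_⟩⟩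
    simp only [Rook.blowUp, blowUpPoint, hca j hj, ← hbR j hj, a, b, Prod.mk.eta,
      Equiv.apply_symm_apply]

end Rooks

theorem aval_blowup_general (m n k ℓ : ℕ) (hm : 0 < m) (hℓ : 0 < ℓ) (hlk : ℓ ≤ k) :
    aval (m * n) k ℓ ≤ m ^ (k - 1) * aval n k ℓ := by
  have : NeZero m := ⟨hm.ne'⟩
  have : Nonempty (Fin k) := ⟨⟨0, hℓ.trans_le hlk⟩⟩
  obtain ⟨S, hS, hcard⟩ := exists_isCover_card_eq_aval n hlk
  let C := diagonalCode (Fin k) (Fin m)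
  calc aval (m * n) k ℓ ≤ #(blowUp C S) :=
        aval_le_card (isCover_blowUp exists_mem_diagonalCode_agree_off hS hℓ)
    _ ≤ #C * #S := card_blowUp_le C S
    _ ≤ m ^ (k - 1) * aval n k ℓ := by
        rw [hcard]
        gcongr
        simpa using card_diagonalCode_le (ι := Fin k) (α := Fin m)

theorem aval_blowup (m n k ℓ : ℕ) (hm : 0 < m) (hn : 0 < n) (hℓ : 0 < ℓ) (hlk : ℓ ≤ k) :
    aval (m * n) k ℓ ≤ m ^ (k - 1) * aval n k ℓ :=
  aval_blowup_general m n k ℓ hm hℓ hlk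
end

section
/- Let α = (9 - 3√5)/4 and let 0 < t ≤ 2α/3. Then f(t) := t/2 + 1 - t(1+t)/(2(1-t)) - (1 - t/(1-t))·√t + t²/(2(2-t)) ≥ α, with equality at t = 2α/3; moreover f is decreasing on (0, 0.4). -/
/-!
On `(0, 0.4)` the derivative of `auxF`, written in `u = √t`, is `P(u) / (2u(1-t)²(2-t)²)`
with `P` a polynomial of degree 9 that is negative for `u² < 2/5`; so `auxF` is strictly
decreasing there. The point `2α/3 = (3 - √5)/2` lies in `(0, 0.4)` and has square root
`(√5 - 1)/2`, which makes `auxF (2α/3) = α` a computation in `ℚ(√5)`; the lower bound then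
follows by monotonicity.
-/

/-- The auxiliary function from the lower-bound argument for `a_{3,2}`. -/
noncomputable def auxF (t : ℝ) : ℝ :=
  t / 2 + 1 - t * (1 + t) / (2 * (1 - t)) - (1 - t / (1 - t)) * Real.sqrt t
    + t ^ 2 / (2 * (2 - t))

open Real

noncomputable def auxFDeriv (t : ℝ) : ℝ :=
  1 / 2 - (1 + 2 * t - t ^ 2) / (2 * (1 - t) ^ 2) + √t / (1 - t) ^ 2
    - (1 - 2 * t) / (2 * √t * (1 - t)) + t * (4 - t) / (2 * (2 - t) ^ 2)

lemma hasDerivAt_auxF {t : ℝ} (h0 : 0 < t) (h1 : t < 1) : HasDerivAt auxF (auxFDeriv t) t := by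
  have h1t : 1 - t ≠ 0 := by linarith
  have h2t : 2 - t ≠ 0 := by linarith
  have hx := hasDerivAt_id' t
  have H := (((hx.div_const 2).add_const 1).sub
      ((hx.mul (hx.const_add 1)).div ((hx.const_sub 1).const_mul 2) (by simpa using h1t))).sub
      (((hx.div (hx.const_sub 1) h1t).const_sub 1).mul (hasDerivAt_sqrt h0.ne'))
    |>.add ((hx.pow 2).div ((hx.const_sub 2).const_mul 2) (by simpa using h2t))
  refine H.congr_deriv ?_
  simp only [auxFDeriv, Pi.mul_apply, Pi.div_apply, Pi.pow_apply, Nat.cast_ofNat,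
    Nat.add_one_sub_one, pow_one]
  field_simp
  ring

noncomputable def auxFDerivNum (u : ℝ) : ℝ :=
  -4 + 24 * u ^ 2 - 12 * u ^ 3 - 29 * u ^ 4 + 15 * u ^ 5 + 13 * u ^ 6 - 6 * u ^ 7 - 2 * u ^ 8
    + u ^ 9

lemma auxFDeriv_sq {u : ℝ} (hu : 0 < u) (hu1 : u ^ 2 < 1) :
    auxFDeriv (u ^ 2) = auxFDerivNum u / (2 * u * (1 - u ^ 2) ^ 2 * (2 - u ^ 2) ^ 2) := by
  have h1 : 1 - u ^ 2 ≠ 0 := by linarith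
  have h2 : 2 - u ^ 2 ≠ 0 := by linarith
  rw [auxFDeriv, sqrt_sq hu.le, auxFDerivNum]
  field_simp
  ring

lemma auxFDerivNum_neg {u : ℝ} (hu : 0 < u) (hu2 : u ^ 2 < 2 / 5) : auxFDerivNum u < 0 := by
  unfold auxFDerivNum
  -- tight: the value at u = √(2/5) ≈ 0.632 is about -0.0036
  nlinarith [sq_nonneg (u ^ 2 - 2 / 5), sq_nonneg (u ^ 2 - 0.63 * u), pow_pos hu 3, pow_pos hu 7]

lemma auxFDeriv_neg {t : ℝ} (h0 : 0 < t) (h4 : t < 0.4) : auxFDeriv t < 0 := by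
  obtain ⟨u, hu, rfl⟩ : ∃ u, 0 < u ∧ u ^ 2 = t := ⟨√t, sqrt_pos.2 h0, sq_sqrt h0.le⟩
  norm_num at h4
  rw [auxFDeriv_sq hu (by linarith)]
  refine div_neg_of_neg_of_pos (auxFDerivNum_neg hu h4) ?_
  have h1 : 0 < 1 - u ^ 2 := by linarith
  have h2 : 0 < 2 - u ^ 2 := by linarith
  positivity

lemma auxF_strictAntiOn : StrictAntiOn auxF (Set.Ioo 0 0.4) := by
  have hderiv {t : ℝ} (ht : t ∈ Set.Ioo (0 : ℝ) 0.4) : HasDerivAt auxF (auxFDeriv t) t :=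
    hasDerivAt_auxF ht.1 (by linarith [ht.2, show (0.4 : ℝ) < 1 by norm_num])
  refine strictAntiOn_of_hasDerivWithinAt_neg (convex_Ioo 0 0.4)
    (fun t ht => (hderiv ht).continuousAt.continuousWithinAt)
    (fun t ht => (hderiv ?_).hasDerivWithinAt) ?_
  · rwa [interior_Ioo] at ht
  · intro t ht
    rw [interior_Ioo] at ht
    exact auxFDeriv_neg ht.1 ht.2

lemma sqrt_three_sub_sqrt_five_div_two : √((3 - √5) / 2) = (√5 - 1) / 2 := by
  have h5 : √5 ^ 2 = 5 := sq_sqrt (by norm_num)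
  have h1 : 1 ≤ √5 := one_le_sqrt.2 (by norm_num)
  rw [show (3 - √5) / 2 = ((√5 - 1) / 2) ^ 2 by linear_combination -h5 / 4]
  exact sqrt_sq (by linarith)

lemma three_sub_sqrt_five_div_two_mem_Ioo : (3 - √5) / 2 ∈ Set.Ioo (0 : ℝ) 0.4 := by
  have hl : 2.2 < √5 := lt_sqrt (by norm_num) |>.2 (by norm_num)
  have hr : √5 < 3 := (sqrt_lt' (by norm_num)).2 (by norm_num)
  constructor <;> norm_num <;> linarith

lemma auxF_three_sub_sqrt_five_div_two : auxF ((3 - √5) / 2) = (9 - 3 * √5) / 4 := by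
  have h5 : √5 ^ 2 = 5 := sq_sqrt (by norm_num)
  have h1 : √5 - 1 ≠ 0 := sub_ne_zero.2 (lt_sqrt zero_le_one |>.2 (by norm_num)).ne'
  have h2 : √5 + 1 ≠ 0 := by positivity
  rw [auxF, sqrt_three_sub_sqrt_five_div_two, show 1 - (3 - √5) / 2 = (√5 - 1) / 2 by ring,
    show 2 - (3 - √5) / 2 = (√5 + 1) / 2 by ring]
  field_simp
  linear_combination (24 - 8 * √5) * h5

theorem auxF_bound :
    (∀ t : ℝ, 0 < t → t ≤ 2 * ((9 - 3 * Real.sqrt 5) / 4) / 3 →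
      (9 - 3 * Real.sqrt 5) / 4 ≤ auxF t) ∧
    auxF (2 * ((9 - 3 * Real.sqrt 5) / 4) / 3) = (9 - 3 * Real.sqrt 5) / 4 ∧
    StrictAntiOn auxF (Set.Ioo 0 0.4) := by
  have hmem := three_sub_sqrt_five_div_two_mem_Ioo
  rw [show 2 * ((9 - 3 * √5) / 4) / 3 = (3 - √5) / 2 by ring]
  refine ⟨fun t ht hle => ?_, auxF_three_sub_sqrt_five_div_two, auxF_strictAntiOn⟩
  rw [← auxF_three_sub_sqrt_five_div_two]
  rcases hle.eq_or_lt with rfl | hlt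
  · rfl
  · exact (auxF_strictAntiOn ⟨ht, hlt.trans hmem.2⟩ hmem hlt).le
end

section
/- Let n ≥ 1 and suppose c_1,...,c_n and x_1,...,x_n are nonnegative integers with c_i ≤ n and x_i ≤ n², set C = Σc_i and X = Σx_i, and assume X ≤ n² and (n - c_i - x_i)(n - c_i) ≤ X for each i. Then C + X ≥ n²·(t/2 + 1 - t(1+t)/(2(1-t)) - (1 - t/(1-t))·√t) - 2n, where t = X/n². -/
lemma key_bound (n s cr xr : ℝ) (hn : 0 < n) (hs0 : 0 ≤ s) (hs1 : s ≤ 1)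
    (hc0 : 0 ≤ cr) (hcn : cr ≤ n) (hx0 : 0 ≤ xr)
    (h : (n - cr - xr) * (n - cr) ≤ s ^ 2 * n ^ 2) :
    n * (1 - s) + s / (1 + s) * xr ≤ cr + xr := by
  have h1s : (0:ℝ) < 1 + s := by linarith
  have goal2 : n * (1 - s) * (1 + s) + s * xr ≤ (cr + xr) * (1 + s) := by
    rcases le_or_gt xr (n * (1 - s) * (1 + s)) with hsmall | hlarge
    · by_contra hA
      push_neg at hA
      have hA' : 0 < (n - cr) * (1 + s) - n * s * (1 + s) - xr := by nlinarith
      have ha : 0 < n - cr := by nlinarith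
      have hB : 0 < (1 + s) * (n * s + (n - cr)) - s * xr := by
        nlinarith [mul_nonneg hs0 (sub_nonneg.2 hsmall), mul_pos h1s ha,
          mul_nonneg (mul_nonneg hs0 hs0) hn.le]
      nlinarith [mul_pos hA' hB, h,
        mul_nonneg (mul_nonneg hs0 hx0) (sub_nonneg.2 hsmall),
        mul_le_of_le_one_left (sq_nonneg (1+s)) hs1, sq_nonneg (1+s),
        mul_nonneg (mul_nonneg h1s.le h1s.le) (sub_nonneg.2 h)]
    · nlinarith [mul_nonneg hc0 hs0]
  calc n * (1 - s) + s / (1 + s) * xr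
      = (n * (1 - s) * (1 + s) + s * xr) / (1 + s) := by field_simp
    _ ≤ ((cr + xr) * (1 + s)) / (1 + s) := by gcongr
    _ = cr + xr := by field_simp

theorem plane_counting_lower_bound (n : ℕ) (hn : 0 < n) (c x : Fin n → ℕ)
    (hc : ∀ i, c i ≤ n) (hx : ∀ i, x i ≤ n ^ 2)
    (C X : ℕ) (hC : C = ∑ i, c i) (hX : X = ∑ i, x i) (hXle : X ≤ n ^ 2)
    (hcond : ∀ i, ((n : ℤ) - c i - x i) * ((n : ℤ) - c i) ≤ (X : ℤ)) :
    (n : ℝ) ^ 2 *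
      ((X : ℝ) / (n : ℝ) ^ 2 / 2 + 1
        - ((X : ℝ) / (n : ℝ) ^ 2) * (1 + (X : ℝ) / (n : ℝ) ^ 2)
            / (2 * (1 - (X : ℝ) / (n : ℝ) ^ 2))
        - (1 - ((X : ℝ) / (n : ℝ) ^ 2) / (1 - (X : ℝ) / (n : ℝ) ^ 2))
            * Real.sqrt ((X : ℝ) / (n : ℝ) ^ 2))
      - 2 * (n : ℝ) ≤ (C : ℝ) + (X : ℝ) := by
  have hnR : (0:ℝ) < (n:ℝ) := by exact_mod_cast hn
  have hn2 : (0:ℝ) < (n:ℝ) ^ 2 := by positivity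
  by_cases hcase : X = n ^ 2
  · have h1 : (X:ℝ) / (n:ℝ) ^ 2 = 1 := by
      rw [hcase]; push_cast; field_simp
    rw [h1]
    norm_num
    have hXR : (X:ℝ) = (n:ℝ)^2 := by rw [hcase]; push_cast; ring
    have hC0 : (0:ℝ) ≤ (C:ℝ) := by positivity
    have hn1 : (1:ℝ) ≤ (n:ℝ) := by exact_mod_cast hn
    nlinarith
  · -- main case : X < n^2
    have hXlt : (X:ℝ) < (n:ℝ)^2 := by
      have : X < n ^ 2 := lt_of_le_of_ne hXle hcase
      exact_mod_cast this
    have hX0 : (0:ℝ) ≤ (X:ℝ) := by positivity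
    set t : ℝ := (X:ℝ) / (n:ℝ) ^ 2 with ht
    have ht0 : 0 ≤ t := by positivity
    have ht1 : t < 1 := by rw [ht, div_lt_one hn2]; exact hXlt
    set s : ℝ := Real.sqrt t with hsdef
    have hs0 : 0 ≤ s := Real.sqrt_nonneg t
    have hs2 : s ^ 2 = t := Real.sq_sqrt ht0
    have hs1 : s < 1 := by
      nlinarith [hs2]
    have hXs : (X:ℝ) = s ^ 2 * (n:ℝ) ^ 2 := by
      rw [hs2, ht]; field_simp
    -- per-index bound
    have key : ∀ i : Fin n, (n:ℝ) * (1 - s) + s / (1 + s) * (x i : ℝ) ≤ (c i : ℝ) + (x i : ℝ) := by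
      intro i
      apply key_bound _ _ _ _ hnR hs0 hs1.le (by positivity) (by exact_mod_cast hc i) (by positivity)
      rw [← hXs]
      exact_mod_cast hcond i
    have hsum := Finset.sum_le_sum (fun i (_ : i ∈ Finset.univ) => key i)
    have hCR : (C:ℝ) = ∑ i : Fin n, (c i : ℝ) := by rw [hC]; push_cast; ring
    have hXR : (X:ℝ) = ∑ i : Fin n, (x i : ℝ) := by rw [hX]; push_cast; ring
    have hsum2 : (n:ℝ) * ((n:ℝ) * (1 - s)) + s / (1 + s) * (X:ℝ) ≤ (C:ℝ) + (X:ℝ) := by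
      have lhs_eq : ∑ i : Fin n, ((n:ℝ) * (1 - s) + s / (1 + s) * (x i : ℝ))
          = (n:ℝ) * ((n:ℝ) * (1 - s)) + s / (1 + s) * (X:ℝ) := by
        rw [Finset.sum_add_distrib, Finset.sum_const, Finset.card_univ, Fintype.card_fin,
          ← Finset.mul_sum, hXR]
        push_cast; ring
      have rhs_eq : ∑ i : Fin n, ((c i : ℝ) + (x i : ℝ)) = (C:ℝ) + (X:ℝ) := by
        rw [Finset.sum_add_distrib, hCR, hXR]
      rw [lhs_eq, rhs_eq] at hsum
      exact hsum
    have h1s : (0:ℝ) < 1 + s := by linarith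
    have h1t : (1:ℝ) - t ≠ 0 := by linarith
    have hid : (n : ℝ) ^ 2 * (t / 2 + 1 - t * (1 + t) / (2 * (1 - t)) - (1 - t / (1 - t)) * s)
        = (n:ℝ) * ((n:ℝ) * (1 - s)) + s / (1 + s) * (X:ℝ) := by
      rw [hXs, ← hs2]
      have h1s' : (1:ℝ) + s ≠ 0 := ne_of_gt h1s
      have h1t' : (1:ℝ) - s ^ 2 ≠ 0 := by rw [hs2]; exact h1t
      field_simp
      ring
    rw [hid]
    linarith
end
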